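/- Preservation of isolated stationary contacts: if u⁻ = u⁺ = 0 and p⁻ = p⁺ = p > 0 (with possibly ρ⁻ ≠ ρ⁺, both positive), then u* = 0 and p* = p, so the TV splitting numerical flux equals (0, p, 0)ᵀ, which coincides with the exact flux on both sides of the contact discontinuity. -/
import Mathlib


theorem tv_splitting_stationary_contact (ρm ρp p γ : ℝ)
    (hρm : 0 < ρm) (hρp : 0 < ρp) (hp : 0 < p) (hγ : 1 < γ) :
    let cm := Real.sqrt (γ * p / ρm)
    let cp := Real.sqrt (γ * p / ρp)
    let Cminus := ρm * ((0 : ℝ) - Real.sqrt ((0 : ℝ) ^ 2 + 4 * cm ^ 2))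
    let Cplus := ρp * ((0 : ℝ) + Real.sqrt ((0 : ℝ) ^ 2 + 4 * cp ^ 2))
    let ustar := (Cplus * 0 - Cminus * 0) / (Cplus - Cminus)
                   - 2 / (Cplus - Cminus) * (p - p)
    let pstar := (Cplus * p - Cminus * p) / (Cplus - Cminus)
                   + Cplus * Cminus / (2 * (Cplus - Cminus)) * ((0 : ℝ) - 0)
    let FA : ℝ × ℝ × ℝ :=
      if 0 ≤ ustar then (ustar * ρm, ustar * (ρm * 0), ustar * (ρm * 0 ^ 2 / 2))
      else (ustar * ρp, ustar * (ρp * 0), ustar * (ρp * 0 ^ 2 / 2))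
    let FP : ℝ × ℝ × ℝ := (0, pstar, γ * ustar * pstar / (γ - 1))
    ustar = 0 ∧ pstar = p ∧
      (FA.1 + FP.1, FA.2.1 + FP.2.1, FA.2.2 + FP.2.2) = ((0 : ℝ), p, (0 : ℝ)) := by
  intro cm cp Cminus Cplus ustar pstar FA FP
  have hγ0 : 0 < γ := lt_trans one_pos hγ
  have hcm2 : 0 < γ * p / ρm := div_pos (mul_pos hγ0 hp) hρm
  have hcp2 : 0 < γ * p / ρp := div_pos (mul_pos hγ0 hp) hρp
  have hcm : 0 < cm := Real.sqrt_pos.mpr hcm2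
  have hcp : 0 < cp := Real.sqrt_pos.mpr hcp2
  have hsm : 0 < Real.sqrt ((0 : ℝ) ^ 2 + 4 * cm ^ 2) := by
    apply Real.sqrt_pos.mpr; positivity
  have hsp : 0 < Real.sqrt ((0 : ℝ) ^ 2 + 4 * cp ^ 2) := by
    apply Real.sqrt_pos.mpr; positivity
  have hCm : Cminus < 0 := by
    have : (0 : ℝ) - Real.sqrt ((0 : ℝ) ^ 2 + 4 * cm ^ 2) < 0 := by linarith
    exact mul_neg_of_pos_of_neg hρm this
  have hCp : 0 < Cplus := by
    have : (0 : ℝ) < (0 : ℝ) + Real.sqrt ((0 : ℝ) ^ 2 + 4 * cp ^ 2) := by linarith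
    exact mul_pos hρp this
  have hd : Cplus - Cminus ≠ 0 := by linarith
  have hu : ustar = 0 := by
    show (Cplus * 0 - Cminus * 0) / (Cplus - Cminus) - 2 / (Cplus - Cminus) * (p - p) = 0
    ring
  have hpst : pstar = p := by
    show (Cplus * p - Cminus * p) / (Cplus - Cminus)
        + Cplus * Cminus / (2 * (Cplus - Cminus)) * ((0 : ℝ) - 0) = p
    rw [sub_self, mul_zero, add_zero]
    rw [show Cplus * p - Cminus * p = (Cplus - Cminus) * p by ring]
    exact mul_div_cancel_left₀ p hd
  refine ⟨hu, hpst, ?_⟩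
  have hFA : FA = (ustar * ρm, ustar * (ρm * 0), ustar * (ρm * 0 ^ 2 / 2)) := by
    show (if 0 ≤ ustar then _ else _) = _
    rw [if_pos (le_of_eq hu.symm)]
  rw [hFA]
  simp [hu, hpst, FP]
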